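/- For the 1D classical Schwarz iteration applied to the linear problem x'' = 0, x(0)=0, x(1)=1 on overlapping subdomains [0,β] and [α,1] with α < β, the error at the interfaces contracts by the factor ρ = (α/β)·((1−β)/(1−α)) < 1 per double iteration; hence the iteration converges linearly. -/
import Mathlib


open Set

/-- classical Schwarz for `x'' = 0`, `x(0)=0`, `x(1)=1` on overlapping
subdomains `[0,β]`, `[α,1]` (`0 < α < β < 1`): the interface error contracts exactly by
the factor `ρ = (α/β)((1−β)/(1−α)) < 1` per double iteration, so the iteration converges
linearly.  Each subdomain solve `x'' = 0` yields an affine function with the Dirichlet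
data coming from the other subdomain's previous iterate. -/
theorem stmt_16 (α β : ℝ) (hα : 0 < α) (hαβ : α < β) (hβ : β < 1)
    (x₁ x₂ : ℕ → ℝ → ℝ)
    (haff₁ : ∀ n, ∃ m c : ℝ, ∀ ξ, x₁ (n + 1) ξ = m * ξ + c)   -- x₁ⁿ⁺¹ solves x''=0
    (haff₂ : ∀ n, ∃ m c : ℝ, ∀ ξ, x₂ (n + 1) ξ = m * ξ + c)   -- x₂ⁿ⁺¹ solves x''=0
    (hbc₁ : ∀ n, x₁ (n + 1) 0 = 0 ∧ x₁ (n + 1) β = x₂ n β)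
    (hbc₂ : ∀ n, x₂ (n + 1) 1 = 1 ∧ x₂ (n + 1) α = x₁ n α) :
    (α / β) * ((1 - β) / (1 - α)) < 1 ∧
      ∀ n, |x₁ (n + 3) α - α| =
        (α / β) * ((1 - β) / (1 - α)) * |x₁ (n + 1) α - α| := by

  have hβ0 : (0:ℝ) < β := hα.trans hαβ
  have hβne : β ≠ 0 := ne_of_gt hβ0
  have h1α : (1:ℝ) - α ≠ 0 := by linarith
  have key1 : ∀ n, x₁ (n + 1) α - α = (α / β) * (x₂ n β - β) := by
    intro n
    obtain ⟨m, c, h⟩ := haff₁ n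
    obtain ⟨h0, hb⟩ := hbc₁ n
    rw [h] at h0 hb
    have hc : c = 0 := by simpa using h0
    rw [h α, hc, ← hb, hc]
    field_simp
    ring
  have key2 : ∀ n, x₂ (n + 1) β - β = ((1 - β) / (1 - α)) * (x₁ n α - α) := by
    intro n
    obtain ⟨m, c, h⟩ := haff₂ n
    obtain ⟨h1, ha⟩ := hbc₂ n
    rw [h] at h1 ha
    rw [h β, ← ha]
    field_simp
    nlinarith [h1]
  have hρ0 : 0 ≤ (α / β) * ((1 - β) / (1 - α)) := by
    apply mul_nonneg
    · positivity
    · apply div_nonneg <;> linarith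
  refine ⟨?_, ?_⟩
  · rw [div_mul_div_comm, div_lt_one (by nlinarith)]
    nlinarith
  · intro n
    have e1 : x₁ (n + 3) α - α = (α / β) * ((1 - β) / (1 - α)) * (x₁ (n + 1) α - α) := by
      have h1 := key1 (n + 2)
      have h2 := key2 (n + 1)
      have : n + 2 + 1 = n + 3 := by ring
      rw [this] at h1
      have : n + 1 + 1 = n + 2 := by ring
      rw [this] at h2
      rw [h1, h2]; ring
    rw [e1, abs_mul, abs_of_nonneg hρ0]
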